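/- Normalizing the members of an ACI list does not change the normal form: ⌈·(⌈t₁⌉,…,⌈t_m⌉)⌉ = ⌈·(t₁,…,t_m)⌉. -/

import Mathlib

inductive BinOp : Type
  | enc | aenc | pair | sig
deriving DecidableEq

inductive Term : Type
  | atom : ℕ → Term
  | var  : ℕ → Term
  | bin  : BinOp → Term → Term → Term
  | priv : Term → Term
  | aci  : List Term → Term

def Term.subst (σ : ℕ → Term) : Term → Term
  | .atom a => .atom a
  | .var x => σ x
  | .bin o p q => .bin o (p.subst σ) (q.subst σ)
  | .priv t => .priv (t.subst σ)
  | .aci L => .aci (L.attach.map fun p => p.1.subst σ)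
decreasing_by
  all_goals simp_wf
  all_goals first
    | omega
    | (have := List.sizeOf_lt_of_mem p.2; omega)

def Term.elems : Term → Set Term
  | .aci L => ⋃ p ∈ L.attach, p.1.elems
  | t => {t}
decreasing_by
  have := List.sizeOf_lt_of_mem p.2; simp_wf; omega

def Term.subDag : Term → Set Term
  | .atom a => {.atom a}
  | .var x => {.var x}
  | .bin o p q => insert (.bin o p q) (p.subDag ∪ q.subDag)
  | .priv t => insert (.priv t) t.subDag
  | .aci L => insert (.aci L) (⋃ p ∈ L.attach, p.1.subDag)
decreasing_by
  all_goals simp_wf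
  all_goals first
    | omega
    | (have := List.sizeOf_lt_of_mem p.2; omega)

def Term.vars (t : Term) : Set ℕ := {x | Term.var x ∈ t.subDag}

def Term.Ground (t : Term) : Prop := t.vars = ∅

/-- Specification of the quasi-subterm function `sub`. -/
structure SubSpec where
  sub : Term → Set Term
  sub_atom : ∀ a, sub (.atom a) = {.atom a}
  sub_var : ∀ x, sub (.var x) = {.var x}
  sub_priv : ∀ t, sub (.priv t) = insert (.priv t) (sub t)
  sub_bin : ∀ o p q, sub (.bin o p q) = insert (.bin o p q) (sub p ∪ sub q)
  sub_aci : ∀ L, sub (.aci L) = insert (.aci L) (⋃ p ∈ (Term.aci L).elems, sub p)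

/-- Specification of the ACI normal form with respect to a strict total order `lt`. -/
structure NormSpec (lt : Term → Term → Prop) where
  nf : Term → Term
  nf_atom : ∀ a, nf (.atom a) = .atom a
  nf_var  : ∀ x, nf (.var x) = .var x
  nf_bin  : ∀ o p q, nf (.bin o p q) = .bin o (nf p) (nf q)
  nf_priv : ∀ t, nf (.priv t) = .priv (nf t)
  nf_aci_single : ∀ L t', nf '' (Term.aci L).elems = {t'} → nf (.aci L) = t'
  nf_aci : ∀ L, (¬ ∃ t', nf '' (Term.aci L).elems = {t'}) →
      ∃ L' : List Term, List.Pairwise lt L' ∧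
        (∀ s, s ∈ L' ↔ s ∈ nf '' (Term.aci L).elems) ∧ nf (.aci L) = .aci L'

/-- The derivable closure of a set `E` of terms under a deduction system `R`,
given as a set of rules (premises, conclusion): the least superset of `E`
closed under the rules. -/
inductive Der (R : Set (Set Term × Term)) (E : Set Term) : Term → Prop where
  | base {t : Term} : t ∈ E → Der R E t
  | step {l : Set Term} {r : Term} : (l, r) ∈ R → (∀ s ∈ l, Der R E s) → Der R E r

/-- The composition rules of the DY+ACI deduction system (for normal form `nf`). -/
inductive DYComp (nf : Term → Term) : Set Term → Term → Prop where
  | enc  (t₁ t₂ : Term) : DYComp nf {t₁, t₂} (nf (.bin .enc t₁ t₂))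
  | aenc (t₁ t₂ : Term) : DYComp nf {t₁, t₂} (nf (.bin .aenc t₁ t₂))
  | pair (t₁ t₂ : Term) : DYComp nf {t₁, t₂} (nf (.bin .pair t₁ t₂))
  | sig  (t₁ t₂ : Term) : DYComp nf {t₁, .priv t₂} (nf (.bin .sig t₁ (.priv t₂)))
  | aci  (L : List Term) (h : L ≠ []) : DYComp nf {t | t ∈ L} (nf (.aci L))

/-- The composition rules of DY+ACI other than the ACI-set construction rule. -/
inductive DYCompNoACI (nf : Term → Term) : Set Term → Term → Prop where
  | enc  (t₁ t₂ : Term) : DYCompNoACI nf {t₁, t₂} (nf (.bin .enc t₁ t₂))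
  | aenc (t₁ t₂ : Term) : DYCompNoACI nf {t₁, t₂} (nf (.bin .aenc t₁ t₂))
  | pair (t₁ t₂ : Term) : DYCompNoACI nf {t₁, t₂} (nf (.bin .pair t₁ t₂))
  | sig  (t₁ t₂ : Term) : DYCompNoACI nf {t₁, .priv t₂} (nf (.bin .sig t₁ (.priv t₂)))

/-- The decomposition rules of the DY+ACI deduction system. -/
inductive DYDecomp (nf : Term → Term) : Set Term → Term → Prop where
  | enc  (t₁ t₂ : Term) : DYDecomp nf {.bin .enc t₁ t₂, nf t₂} (nf t₁)
  | aenc (t₁ t₂ : Term) : DYDecomp nf {.bin .aenc t₁ t₂, nf (.priv t₂)} (nf t₁)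
  | fst  (t₁ t₂ : Term) : DYDecomp nf {.bin .pair t₁ t₂} (nf t₁)
  | snd  (t₁ t₂ : Term) : DYDecomp nf {.bin .pair t₁ t₂} (nf t₂)
  | aci  (L : List Term) (t : Term) (h : t ∈ L) : DYDecomp nf {.aci L} (nf t)

/-- The DY+ACI deduction system as a set of rules. -/
def DYACI (nf : Term → Term) : Set (Set Term × Term) :=
  {p | DYComp nf p.1 p.2 ∨ DYDecomp nf p.1 p.2}

/-- A ground substitution `σ` is a model of a constraint system
`S = {Eᵢ ▷ tᵢ}` if `⌈tᵢσ⌉` is derivable from `⌈Eᵢσ⌉` in DY+ACI. -/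
def Models (nf : Term → Term) (σ : ℕ → Term) (S : List (Set Term × Term)) : Prop :=
  ∀ c ∈ S, Der (DYACI nf) (nf '' ((fun t => t.subst σ) '' c.1)) (nf (c.2.subst σ))

/-- All terms occurring in a constraint system. -/
def termsOf (S : List (Set Term × Term)) : Set Term :=
  ⋃ c ∈ S, c.1 ∪ {c.2}

/-- DAG-subterms of a constraint system. -/
def subDagS (S : List (Set Term × Term)) : Set Term :=
  ⋃ t ∈ termsOf S, t.subDag

/-- Variables of a constraint system. -/
def varsS (S : List (Set Term × Term)) : Set ℕ :=
  {x | Term.var x ∈ subDagS S}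

/-- Applying a substitution to a constraint system. -/
def substS (θ : ℕ → Term) (S : List (Set Term × Term)) : List (Set Term × Term) :=
  S.map fun c => ((fun t => t.subst θ) '' c.1, c.2.subst θ)

/-- The domain of a substitution. -/
def dom (θ : ℕ → Term) : Set ℕ := {x | θ x ≠ .var x}

/-!
The normal form of `·(L)` depends only on the set `⌈·⌉ '' elems ·(L)`: a list that is strictly
sorted for `lt` is determined by its members. It therefore suffices that normalizing a term
does not change the normal forms of its elements. For an ACI term this is the equation
`elems ⌈·(L)⌉ = ⌈·⌉ '' elems ·(L)` together with idempotence `⌈⌈t⌉⌉ = ⌈t⌉`, which follows by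
well-founded induction on size, the elements of `·(L)` being smaller than `·(L)`.
-/

namespace Term

def IsAci (t : Term) : Prop := ∃ L, t = .aci L

lemma elems_aci (L : List Term) : (aci L).elems = ⋃ t ∈ L, t.elems := by
  rw [elems]; ext; simp

lemma elems_of_not_isAci {t : Term} (h : ¬ t.IsAci) : t.elems = {t} := by
  rw [elems.eq_def]
  split
  · exact absurd ⟨_, rfl⟩ h
  · rfl

lemma not_isAci_of_mem_elems {s t : Term} (hs : s ∈ t.elems) : ¬ s.IsAci := by
  induction t using elems.induct with
  | case1 L ih =>
    rw [elems_aci, Set.mem_iUnion₂] at hs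
    obtain ⟨u, hu, hs⟩ := hs
    exact ih ⟨u, hu⟩ hs
  | case2 t ht =>
    rw [elems_of_not_isAci fun ⟨L, h⟩ => ht L h, Set.mem_singleton_iff] at hs
    exact hs ▸ fun ⟨L, h⟩ => ht L h

lemma sizeOf_le_of_mem_elems {s t : Term} (hs : s ∈ t.elems) : sizeOf s ≤ sizeOf t := by
  induction t using elems.induct with
  | case1 L ih =>
    rw [elems_aci, Set.mem_iUnion₂] at hs
    obtain ⟨u, hu, hs⟩ := hs
    have : sizeOf s ≤ sizeOf u := ih ⟨u, hu⟩ hs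
    have := List.sizeOf_lt_of_mem hu
    simp only [aci.sizeOf_spec]
    omega
  | case2 t ht =>
    rw [elems_of_not_isAci fun ⟨L, h⟩ => ht L h, Set.mem_singleton_iff] at hs
    exact hs ▸ Nat.le_refl _

lemma sizeOf_lt_of_mem_elems_aci {s : Term} {L : List Term} (hs : s ∈ (aci L).elems) :
    sizeOf s < sizeOf (aci L) := by
  rw [elems_aci, Set.mem_iUnion₂] at hs
  obtain ⟨u, hu, hs⟩ := hs
  have := sizeOf_le_of_mem_elems hs
  have := List.sizeOf_lt_of_mem hu
  simp only [aci.sizeOf_spec]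
  omega

end Term

open Term

namespace NormSpec

variable {lt : Term → Term → Prop} (N : NormSpec lt)

lemma not_isAci_nf {t : Term} (h : ¬ t.IsAci) : ¬ (N.nf t).IsAci := by
  cases t with
  | aci L => exact absurd ⟨L, rfl⟩ h
  | atom a => rw [N.nf_atom]; rintro ⟨_, ⟨⟩⟩
  | var x => rw [N.nf_var]; rintro ⟨_, ⟨⟩⟩
  | bin o p q => rw [N.nf_bin]; rintro ⟨_, ⟨⟩⟩
  | priv t => rw [N.nf_priv]; rintro ⟨_, ⟨⟩⟩

lemma not_isAci_of_mem_image_elems {s t : Term} (hs : s ∈ N.nf '' t.elems) : ¬ s.IsAci := by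
  obtain ⟨u, hu, rfl⟩ := hs
  exact N.not_isAci_nf (not_isAci_of_mem_elems hu)

lemma elems_nf_aci (L : List Term) : (N.nf (aci L)).elems = N.nf '' (aci L).elems := by
  by_cases hsing : ∃ t', N.nf '' (aci L).elems = {t'}
  · obtain ⟨t', ht'⟩ := hsing
    have ht'_mem : t' ∈ N.nf '' (aci L).elems := ht' ▸ rfl
    rw [N.nf_aci_single L t' ht', ht', elems_of_not_isAci (N.not_isAci_of_mem_image_elems ht'_mem)]
  · obtain ⟨L', -, hmem, hnf⟩ := N.nf_aci L hsing
    have hL' : ∀ u ∈ L', u.elems = {u} := fun u hu =>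
      elems_of_not_isAci (N.not_isAci_of_mem_image_elems ((hmem u).1 hu))
    rw [hnf, elems_aci]
    ext x
    rw [Set.mem_iUnion₂]
    constructor
    · rintro ⟨u, hu, hx⟩
      rw [hL' u hu, Set.mem_singleton_iff] at hx
      exact hx ▸ (hmem u).1 hu
    · intro hx
      exact ⟨x, (hmem x).2 hx, hL' x ((hmem x).2 hx) ▸ Set.mem_singleton x⟩

lemma nf_aci_eq_of_image_elems_eq [IsStrictOrder Term lt] {L₁ L₂ : List Term}
    (h : N.nf '' (aci L₁).elems = N.nf '' (aci L₂).elems) : N.nf (aci L₁) = N.nf (aci L₂) := by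
  by_cases hsing : ∃ t', N.nf '' (aci L₁).elems = {t'}
  · obtain ⟨t', ht'⟩ := hsing
    rw [N.nf_aci_single L₁ t' ht', N.nf_aci_single L₂ t' (h ▸ ht')]
  · obtain ⟨L₁', hs₁, hm₁, hnf₁⟩ := N.nf_aci L₁ hsing
    obtain ⟨L₂', hs₂, hm₂, hnf₂⟩ := N.nf_aci L₂ (h ▸ hsing)
    rw [hnf₁, hnf₂, hs₁.eq_of_mem_iff hs₂ fun s => by rw [hm₁, hm₂, h]]

theorem nf_nf [IsStrictOrder Term lt] : ∀ t, N.nf (N.nf t) = N.nf t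
  | .atom a => by rw [N.nf_atom, N.nf_atom]
  | .var x => by rw [N.nf_var, N.nf_var]
  | .bin o p q => by rw [N.nf_bin, N.nf_bin, nf_nf p, nf_nf q]
  | .priv t => by rw [N.nf_priv, N.nf_priv, nf_nf t]
  | .aci L => by
    have ih : ∀ s ∈ (aci L).elems, N.nf (N.nf s) = N.nf s := fun s hs =>
      have := sizeOf_lt_of_mem_elems_aci hs
      nf_nf s
    by_cases hsing : ∃ t', N.nf '' (aci L).elems = {t'}
    · obtain ⟨t', ht'⟩ := hsing
      obtain ⟨s, hs, rfl⟩ : t' ∈ N.nf '' (aci L).elems := ht' ▸ rfl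
      rw [N.nf_aci_single L _ ht', ih s hs]
    · obtain ⟨L', -, -, hnf⟩ := N.nf_aci L hsing
      calc N.nf (N.nf (aci L)) = N.nf (aci L') := by rw [hnf]
        _ = N.nf (aci L) := N.nf_aci_eq_of_image_elems_eq <| by
          rw [← hnf, elems_nf_aci, Set.image_image]
          exact Set.image_congr ih
termination_by t => t
decreasing_by all_goals first | assumption | (simp_wf <;> omega)

theorem image_elems_nf [IsStrictOrder Term lt] (t : Term) :
    N.nf '' (N.nf t).elems = N.nf '' t.elems := by
  by_cases ht : t.IsAci
  · obtain ⟨L, rfl⟩ := ht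
    rw [elems_nf_aci, Set.image_image]
    exact Set.image_congr fun s _ => N.nf_nf s
  · rw [elems_of_not_isAci ht, elems_of_not_isAci (N.not_isAci_nf ht), Set.image_singleton,
      Set.image_singleton, N.nf_nf]

end NormSpec

/-- Normalizing the members of an ACI list does not change the normal form. -/
theorem norm_aci_map_norm (lt : Term → Term → Prop) (hlt : IsStrictTotalOrder Term lt)
    (N : NormSpec lt) : ∀ L : List Term, L ≠ [] →
      N.nf (.aci (L.map N.nf)) = N.nf (.aci L) := by
  intro L _
  apply N.nf_aci_eq_of_image_elems_eq
  simp [elems_aci, Set.image_iUnion₂, N.image_elems_nf]
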